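/- arXiv:1404.0843 — 5 statements merged into one kernel-verified Lean document; each statement's English description precedes it below -/
import Mathlib

section
/- There exists a cycle property Y that is closed under cyclic permutations and a first cycle game with winning condition Y that is not pointwise memoryless determined for Player 0: Player 0 has a winning strategy from some vertex but no memoryless winning strategy from that vertex. -/
structure Arena (U : Type) where
  V : Type
  finV : Fintype V
  decV : DecidableEq V
  owner : V → Fin 2
  E : V → V → Prop
  nodead : ∀ v, ∃ w, E v w
  lab : V → V → U

namespace Arena

variable {U : Type} (A : Arena U)

instance : DecidableEq A.V := A.decV
instance : Fintype A.V := A.finV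

/-- An infinite play: consecutive vertices are connected by edges. -/
def IsPlay (π : ℕ → A.V) : Prop := ∀ j, A.E (π j) (π (j + 1))

/-- A strategy: given the history (past vertices, in order) and the current
vertex, produce the next vertex. -/
abbrev Strategy := List A.V → A.V → A.V

def Legal (S : A.Strategy) : Prop := ∀ h v, A.E v (S h v)

def Memoryless (S : A.Strategy) : Prop := ∀ h h' v, S h v = S h' v

/-- The history of a play: the first `j` vertices. -/
def hist (π : ℕ → A.V) (j : ℕ) : List A.V := (List.range j).map π

/-- A play is consistent with a strategy of player `i`. -/
def Consistent (i : Fin 2) (S : A.Strategy) (π : ℕ → A.V) : Prop :=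
  ∀ j, A.owner (π j) = i → π (j + 1) = S (A.hist π j) (π j)

/-- One step of the stack-based cycles-decomposition algorithm.  The stack is
a list of vertices (a simple path).  Pushing vertex `v`: if `v` already occurs
on the stack, the cycle from (the first occurrence of) `v` to the top is popped
and output (represented by its list of vertices, starting with `v`, with an
implicit closing edge back to `v`); otherwise `v` is pushed. -/
def step (s : List A.V) (v : A.V) : List A.V × Option (List A.V) :=
  if v ∈ s then (s.take (s.idxOf v + 1), some (s.drop (s.idxOf v)))
  else (s ++ [v], none)

/-- The stack after processing vertices `π 0, …, π n`. -/
def stackAt (π : ℕ → A.V) : ℕ → List A.V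
  | 0 => [π 0]
  | n + 1 => (A.step (stackAt π n) (π (n + 1))).1

/-- The cycle (if any) output while processing vertex `π (n+1)`. -/
def cycleAt (π : ℕ → A.V) (n : ℕ) : Option (List A.V) :=
  (A.step (A.stackAt π n) (π (n + 1))).2

/-- The labels of the edges of a cycle `[v, w₁, …, w_k]`, i.e. of the edges
`(v,w₁)(w₁,w₂)…(w_k,v)`. -/
def cycLabels : List A.V → List U
  | [] => []
  | v :: rest => List.zipWith A.lab (v :: rest) (rest ++ [v])

def Objective := (ℕ → A.V) → Prop

/-- First-cycle objective: the first cycle output by the decomposition has its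
labels in `Y`. -/
def FCObj (Y : Set (List U)) : A.Objective := fun π =>
  ∃ n c, A.cycleAt π n = some c ∧ (∀ m, m < n → A.cycleAt π m = none) ∧
    A.cycLabels c ∈ Y

/-- All-cycles objective: every cycle of the decomposition has labels in `Y`. -/
def ACObj (Y : Set (List U)) : A.Objective := fun π =>
  ∀ n c, A.cycleAt π n = some c → A.cycLabels c ∈ Y

def shift (π : ℕ → A.V) (k : ℕ) : ℕ → A.V := fun n => π (n + k)

/-- Suffix all-cycles objective: some suffix of the play has all cycles of its
decomposition with labels in `Y`. -/
def EACObj (Y : Set (List U)) : A.Objective := fun π =>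
  ∃ k, A.ACObj Y (A.shift π k)

/-- The objective induced by a winning condition `W ⊆ U^ω`. -/
def WObj (W : Set (ℕ → U)) : A.Objective := fun π =>
  (fun j => A.lab (π j) (π (j + 1))) ∈ W

/-- `S` is a winning strategy for player `i` from `v` for objective `O`. -/
def WinsFrom (O : A.Objective) (i : Fin 2) (S : A.Strategy) (v : A.V) : Prop :=
  A.Legal S ∧ ∀ π, A.IsPlay π → π 0 = v → A.Consistent i S π →
    (if i = 0 then O π else ¬ O π)

def WinRegion (O : A.Objective) (i : Fin 2) : Set A.V :=
  { v | ∃ S, A.WinsFrom O i S v }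

def PointwiseMemoryless (O : A.Objective) (i : Fin 2) : Prop :=
  ∀ v ∈ A.WinRegion O i, ∃ S, A.Memoryless S ∧ A.WinsFrom O i S v

def UniformMemoryless (O : A.Objective) (i : Fin 2) : Prop :=
  ∃ S, A.Memoryless S ∧ ∀ v ∈ A.WinRegion O i, A.WinsFrom O i S v

def Determined (O : A.Objective) : Prop :=
  ∀ v, v ∈ A.WinRegion O 0 ∨ v ∈ A.WinRegion O 1

def PointwiseMemDet (O : A.Objective) : Prop :=
  A.Determined O ∧ A.PointwiseMemoryless O 0 ∧ A.PointwiseMemoryless O 1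

def UniformMemDet (O : A.Objective) : Prop :=
  A.Determined O ∧ A.UniformMemoryless O 0 ∧ A.UniformMemoryless O 1

/-- The game `(A, O)` is `Y`-greedy. -/
def YGreedy (Y : Set (List U)) (O : A.Objective) : Prop :=
  (∀ π, A.IsPlay π → A.ACObj Y π → O π) ∧
  (∀ π, A.IsPlay π → A.ACObj Yᶜ π → ¬ O π)

/-- The arena `A` is `Y`-unambiguous. -/
def Unambiguous (Y : Set (List U)) : Prop :=
  ∀ π, A.IsPlay π → ¬ (A.EACObj Y π ∧ A.EACObj Yᶜ π)

/-- All vertices belong to player `i`. -/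
def SolitaireFor (i : Fin 2) : Prop := ∀ v, A.owner v = i

end Arena

/-- A cycle property is closed under cyclic permutations. -/
def ClosedCyc {U : Type} (Y : Set (List U)) : Prop :=
  ∀ (a : U) (b : List U), (a :: b) ∈ Y → (b ++ [a]) ∈ Y

/-- A cycle property is closed under concatenation. -/
def ClosedConcat {U : Type} (Y : Set (List U)) : Prop :=
  ∀ a b, a ∈ Y → b ∈ Y → (a ++ b) ∈ Y

/-- A Moore machine generating a strategy on arena `A`. -/
structure Moore {U : Type} (A : Arena U) where
  M : Type
  finM : Fintype M
  m0 : M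
  upd : A.V → M → M
  out : A.V → M → A.V

namespace Moore

variable {U : Type} {A : Arena U}

def card (Mm : Moore A) : ℕ := @Fintype.card Mm.M Mm.finM

/-- Memory state reached after reading a history. -/
def run (Mm : Moore A) (h : List A.V) : Mm.M :=
  h.foldl (fun m x => Mm.upd x m) Mm.m0

/-- The Moore machine generates strategy `S`. -/
def Generates (Mm : Moore A) (S : A.Strategy) : Prop :=
  ∀ h x, S h x = Mm.out x (Mm.run h)

end Moore

/-!
From `v2`, Player 1 moves either to `v1` or to `v4`. A Player 0 who remembers that choice wins
from `v2`: after `v2 v1` she returns to `v2`, closing a 2-cycle, and after `v2 v4 v1` she moves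
to `v3`, so that the first cycle is `v2 v4 v1 v3`. A memoryless Player 0 always leaves `v1` for
the same vertex `w`, and Player 1 then closes the triangle through `v2` and the edge `(v1, w)`
(`v2 v4 v1` if `w = v2`, `v2 v1 v3` if `w = v3`), whose length is odd.
-/

namespace Arena

variable {U : Type} {A : Arena U}

lemma hist_succ (π : ℕ → A.V) (j : ℕ) : A.hist π (j + 1) = A.hist π j ++ [π j] := by
  simp [hist, List.range_succ]

lemma hist_prefix_hist (π : ℕ → A.V) {m n : ℕ} (h : m ≤ n) : A.hist π m <+: A.hist π n := by
  induction n, h using Nat.le_induction with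
  | base => exact List.prefix_refl _
  | succ n _ ih => exact ih.trans (hist_succ π n ▸ List.prefix_append _ _)

lemma length_cycLabels (c : List A.V) : (A.cycLabels c).length = c.length := by
  cases c <;> simp [cycLabels]

section FirstReturn

variable {π : ℕ → A.V} {k : ℕ}

lemma apply_notMem_hist {n m : ℕ} (hnd : (A.hist π n).Nodup) (hm : m < n) :
    π m ∉ A.hist π m := by
  have hnd' := hnd.sublist (hist_prefix_hist π hm).sublist
  rw [hist_succ, ← List.concat_eq_append, List.nodup_concat] at hnd'
  exact hnd'.1

lemma stackAt_eq_hist (hnd : (A.hist π (k + 1)).Nodup) {m : ℕ} (hm : m ≤ k) :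
    A.stackAt π m = A.hist π (m + 1) := by
  induction m with
  | zero => simp [stackAt, hist]
  | succ m ih =>
    rw [stackAt, ih (by omega), step, if_neg (apply_notMem_hist hnd (by omega)), ← hist_succ]

lemma cycleAt_eq_none_of_lt (hnd : (A.hist π (k + 1)).Nodup) {m : ℕ} (hm : m < k) :
    A.cycleAt π m = none := by
  rw [cycleAt, stackAt_eq_hist hnd hm.le, step, if_neg (apply_notMem_hist hnd (by omega))]

lemma cycleAt_eq_hist (hnd : (A.hist π (k + 1)).Nodup) (hret : π (k + 1) = π 0) :
    A.cycleAt π k = some (A.hist π (k + 1)) := by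
  have hcons : A.hist π (k + 1) = π 0 :: (List.range k).map (π ∘ Nat.succ) := by
    simp [hist, List.range_succ_eq_map]
  rw [cycleAt, stackAt_eq_hist hnd le_rfl, step, hret, hcons]
  simp

theorem fcObj_iff_of_first_return (Y : Set (List U)) (hnd : (A.hist π (k + 1)).Nodup)
    (hret : π (k + 1) = π 0) : A.FCObj Y π ↔ A.cycLabels (A.hist π (k + 1)) ∈ Y := by
  constructor
  · rintro ⟨n, c, hc, hbefore, hY⟩
    obtain rfl : n = k := by
      by_contra hne
      rcases Nat.lt_or_gt_of_ne hne with hlt | hgt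
      · simp [cycleAt_eq_none_of_lt hnd hlt] at hc
      · simpa [cycleAt_eq_hist hnd hret] using hbefore k hgt
    obtain rfl : c = A.hist π (n + 1) := by simpa [cycleAt_eq_hist hnd hret] using hc.symm
    exact hY
  · exact fun hY => ⟨k, _, cycleAt_eq_hist hnd hret, fun _ => cycleAt_eq_none_of_lt hnd, hY⟩

end FirstReturn

section Triangle

variable {a b c : A.V}

def triangle (a b c : A.V) (n : ℕ) : A.V := ![a, b, c] (Fin.ofNat 3 n)

lemma triangle_succ (n : ℕ) : A.triangle a b c (n + 1) = ![a, b, c] (Fin.ofNat 3 n + 1) := by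
  rw [triangle]
  congr 1
  ext
  simp [Fin.val_add]

lemma isPlay_triangle (hab : A.E a b) (hbc : A.E b c) (hca : A.E c a) :
    A.IsPlay (A.triangle a b c) := by
  intro j
  rw [triangle_succ, triangle]
  generalize Fin.ofNat 3 j = x
  fin_cases x <;> assumption

lemma consistent_triangle {i : Fin 2} {S : A.Strategy} (hS : A.Memoryless S)
    (h : ∀ x : Fin 3, A.owner (![a, b, c] x) = i → ![a, b, c] (x + 1) = S [] (![a, b, c] x)) :
    A.Consistent i S (A.triangle a b c) := by
  intro j hj
  rw [triangle_succ, hS _ []]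
  exact h _ hj

theorem fcObj_triangle_iff (Y : Set (List U)) (hnd : [a, b, c].Nodup) :
    A.FCObj Y (A.triangle a b c) ↔ A.cycLabels [a, b, c] ∈ Y := by
  have hhist : A.hist (A.triangle a b c) 3 = [a, b, c] := rfl
  rw [fcObj_iff_of_first_return (k := 2) Y (hhist ▸ hnd) rfl, hhist]

end Triangle

end Arena

lemma closedCyc_setOf_length {U : Type} (P : ℕ → Prop) : ClosedCyc {l : List U | P l.length} := by
  intro a b h
  simpa using h

/-- Vertices `0, 1, 2, 3` stand for `v1, v2, v3, v4`; every edge is labelled `0`. -/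
abbrev twoTriangles : Arena ℕ where
  V := Fin 4
  finV := inferInstance
  decV := inferInstance
  owner := fun v => if v = 0 then 0 else 1
  E := fun v w => (v.val, w.val) ∈ [(0, 1), (1, 0), (0, 2), (2, 1), (1, 3), (3, 0)]
  nodead := by decide
  lab := fun _ _ => 0

namespace twoTriangles

open Arena

lemma cycLabels_mem_even_iff (c : List (Fin 4)) :
    twoTriangles.cycLabels c ∈ {l : List ℕ | Even l.length} ↔ Even c.length := by
  simp [length_cycLabels]

def evenCycleStrategy : twoTriangles.Strategy := fun h v =>
  if v = 0 then (if h = [1] then 1 else 2)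
  else if v = 1 then 0 else if v = 2 then 1 else 0

lemma legal_evenCycleStrategy : twoTriangles.Legal evenCycleStrategy := by
  intro h v
  by_cases hh : h = [1]
  · subst hh; revert v; decide
  · simp only [evenCycleStrategy, if_neg hh]; revert v; decide

theorem winsFrom_evenCycleStrategy :
    twoTriangles.WinsFrom (twoTriangles.FCObj {l | Even l.length}) 0 evenCycleStrategy 1 := by
  refine ⟨legal_evenCycleStrategy, fun π hπ h0 hcons => ?_⟩
  rw [if_pos rfl]
  have hsucc : ∀ v w : Fin 4, twoTriangles.E v w →
      (v = 1 → w = 0 ∨ w = 3) ∧ (v = 2 → w = 1) ∧ (v = 3 → w = 0) := by decide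
  rcases (hsucc _ _ (hπ 0)).1 h0 with h1 | h1
  · have h2 : π 2 = 1 := by
      rw [hcons 1 (by rw [h1]; rfl), h1, show twoTriangles.hist π 1 = [1] by simp [hist, h0]]; rfl
    have hhist : twoTriangles.hist π 2 = [1, 0] := by simp [hist, List.range_succ, h0, h1]
    rw [fcObj_iff_of_first_return (k := 1) _ (by rw [hhist]; decide) (h2.trans h0.symm), hhist,
      cycLabels_mem_even_iff]
    decide
  · have h2 : π 2 = 0 := (hsucc _ _ (hπ 1)).2.2 h1
    have h3 : π 3 = 2 := by
      rw [hcons 2 (by rw [h2]; rfl), h2,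
        show twoTriangles.hist π 2 = [1, 3] by simp [hist, List.range_succ, h0, h1]]; rfl
    have h4 : π 4 = 1 := (hsucc _ _ (hπ 3)).2.1 h3
    have hhist : twoTriangles.hist π 4 = [1, 3, 0, 2] := by
      simp [hist, List.range_succ, h0, h1, h2, h3]
    rw [fcObj_iff_of_first_return (k := 3) _ (by rw [hhist]; decide) (h4.trans h0.symm), hhist,
      cycLabels_mem_even_iff]
    decide

theorem not_winsFrom_of_memoryless {S : twoTriangles.Strategy} (hS : twoTriangles.Memoryless S) :
    ¬ twoTriangles.WinsFrom (twoTriangles.FCObj {l | Even l.length}) 0 S 1 := by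
  rintro ⟨hlegal, hwin⟩
  obtain ⟨x, y, hnd, h1x, hxy, hy1, hresp⟩ : ∃ x y : Fin 4, [1, x, y].Nodup ∧
      twoTriangles.E 1 x ∧ twoTriangles.E x y ∧ twoTriangles.E y 1 ∧
      ∀ i : Fin 3, twoTriangles.owner (![1, x, y] i) = 0 →
        ![1, x, y] i = 0 ∧ ![1, x, y] (i + 1) = S [] 0 := by
    have hw := hlegal [] 0
    generalize S [] 0 = w at hw
    revert w
    decide
  have hcons : twoTriangles.Consistent 0 S (twoTriangles.triangle 1 x y) :=
    consistent_triangle hS fun i hi => by rw [(hresp i hi).1]; exact (hresp i hi).2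
  have hfc := hwin _ (isPlay_triangle h1x hxy hy1) rfl hcons
  rw [if_pos rfl, fcObj_triangle_iff _ hnd, cycLabels_mem_even_iff] at hfc
  exact (by decide : ¬ Even 3) hfc

end twoTriangles

/-- there is a cycle property closed under cyclic permutations
whose first cycle game is not pointwise memoryless for Player 0. -/
theorem stmt0 :
    ∃ (Y : Set (List ℕ)), ClosedCyc Y ∧
      ∃ (A : Arena ℕ) (v : A.V),
        (∃ S, A.WinsFrom (A.FCObj Y) 0 S v) ∧
        ¬ ∃ S, A.Memoryless S ∧ A.WinsFrom (A.FCObj Y) 0 S v :=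
  ⟨{l | Even l.length}, closedCyc_setOf_length _, twoTriangles, 1,
    ⟨_, twoTriangles.winsFrom_evenCycleStrategy⟩,
    fun ⟨_, hS, hwin⟩ => twoTriangles.not_winsFrom_of_memoryless hS hwin⟩
end

section
/- Every solitaire first cycle game is pointwise memoryless determined: in a first cycle game where all vertices belong to a single player, if that player has a winning strategy from vertex v, then that player has a memoryless winning strategy from v. -/
/-! In a solitaire game the play of a winning strategy from `v` is decided as soon as a vertex
repeats, which fixes its first cycle. Up to that point the play is a simple path, so the
memoryless strategy following that path (and moving arbitrarily elsewhere) produces the same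
prefix, hence the same first cycle, on every consistent play. -/

theorem apply_succ_notMem_map_range {α : Type*} {π : ℕ → α} {n : ℕ}
    (hinj : Set.InjOn π (Set.Iic (n + 1))) : π (n + 1) ∉ (List.range (n + 1)).map π := by
  simp only [List.mem_map, List.mem_range]
  rintro ⟨j, hj, hπj⟩
  have := hinj (show j ≤ n + 1 by omega) (show n + 1 ≤ n + 1 from le_rfl) hπj
  omega

namespace Arena

open Set

variable {U : Type} (A : Arena U)

def IsFirstCycleAt (π : ℕ → A.V) (n : ℕ) (c : List A.V) : Prop :=
  A.cycleAt π n = some c ∧ ∀ m < n, A.cycleAt π m = none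

theorem stackAt_of_injOn {π : ℕ → A.V} {n : ℕ} (hinj : InjOn π (Iic n)) :
    A.stackAt π n = (List.range (n + 1)).map π := by
  induction n with
  | zero => rfl
  | succ n ih =>
    rw [stackAt, step, ih (hinj.mono (Iic_subset_Iic.2 n.le_succ)),
      if_neg (apply_succ_notMem_map_range hinj), List.range_succ (n := n + 1), List.map_append,
      List.map_singleton]

theorem cycleAt_eq_none_of_injOn {π : ℕ → A.V} {n : ℕ} (hinj : InjOn π (Iic (n + 1))) :
    A.cycleAt π n = none := by
  rw [cycleAt, step, A.stackAt_of_injOn (hinj.mono (Iic_subset_Iic.2 n.le_succ)),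
    if_neg (apply_succ_notMem_map_range hinj)]

/-- The first cycle is closed by the first repetition of a vertex, which exists because
`A.V` is finite. -/
theorem exists_isFirstCycleAt (π : ℕ → A.V) :
    ∃ n c, InjOn π (Iic n) ∧ A.IsFirstCycleAt π n c := by
  have hrep : ∃ n, ∃ j ≤ n, π j = π (n + 1) := by
    obtain ⟨a, b, hab, hπ⟩ := Finite.exists_ne_map_eq_of_infinite π
    rcases hab.lt_or_gt with h | h
    · exact ⟨b - 1, a, by omega, by rw [hπ, Nat.sub_add_cancel (by omega)]⟩
    · exact ⟨a - 1, b, by omega, by rw [← hπ, Nat.sub_add_cancel (by omega)]⟩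
  set n := Nat.find hrep
  have hinj : InjOn π (Iic n) := by
    intro a ha b hb hπ
    by_contra hab
    have hmin (a b : ℕ) (hb : b ≤ n) (hab : a < b) (hπ : π a = π b) : False := by
      have := Nat.find_min' hrep (m := b - 1)
        ⟨a, by omega, by rw [hπ, Nat.sub_add_cancel (by omega)]⟩
      omega
    rcases Ne.lt_or_gt hab with h | h
    · exact hmin a b hb h hπ
    · exact hmin b a ha h hπ.symm
  have hclosing : π (n + 1) ∈ A.stackAt π n := by
    obtain ⟨j, hj, hπj⟩ := Nat.find_spec hrep
    rw [A.stackAt_of_injOn hinj]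
    exact List.mem_map.2 ⟨j, List.mem_range.2 (by omega), hπj⟩
  obtain ⟨c, hc⟩ : ∃ c, A.cycleAt π n = some c :=
    ⟨_, by rw [cycleAt, step, if_pos hclosing]⟩
  exact ⟨n, c, hinj, hc,
    fun m hm => A.cycleAt_eq_none_of_injOn (hinj.mono (Iic_subset_Iic.2 hm))⟩

variable {A} in
theorem IsFirstCycleAt.congr {π π' : ℕ → A.V} {n : ℕ} {c : List A.V}
    (hc : A.IsFirstCycleAt π n c) (hagree : ∀ t ≤ n + 1, π' t = π t) :
    A.IsFirstCycleAt π' n c := by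
  have hstack (m : ℕ) (hm : m ≤ n) : A.stackAt π' m = A.stackAt π m := by
    induction m with
    | zero => rw [stackAt, stackAt, hagree 0 (Nat.zero_le _)]
    | succ m ih => rw [stackAt, stackAt, ih (by omega), hagree (m + 1) (by omega)]
  have hcycle (m : ℕ) (hm : m ≤ n) : A.cycleAt π' m = A.cycleAt π m := by
    rw [cycleAt, cycleAt, hstack m hm, hagree (m + 1) (by omega)]
  exact ⟨(hcycle n le_rfl).trans hc.1,
    fun m hm => (hcycle m hm.le).trans (hc.2 m hm)⟩

theorem FCObj_iff_of_isFirstCycleAt {Y : Set (List U)} {π : ℕ → A.V} {n : ℕ} {c : List A.V}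
    (hc : A.IsFirstCycleAt π n c) : A.FCObj Y π ↔ A.cycLabels c ∈ Y := by
  refine ⟨fun ⟨n', c', hc', hnone', hY⟩ => ?_, fun hY => ⟨n, c, hc.1, hc.2, hY⟩⟩
  obtain rfl : n' = n := by
    by_contra hne
    rcases Ne.lt_or_gt hne with h | h
    · simp [hc.2 n' h] at hc'
    · simpa [hnone' n h] using hc.1
  rw [hc.1, Option.some_inj] at hc'
  exact hc' ▸ hY

/-- The history and the current vertex after `n` moves, all of them made by `S`. -/
def runStrategy (S : A.Strategy) (v : A.V) : ℕ → List A.V × A.V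
  | 0 => ([], v)
  | n + 1 => ((runStrategy S v n).1 ++ [(runStrategy S v n).2],
      S (runStrategy S v n).1 (runStrategy S v n).2)

def playOf (S : A.Strategy) (v : A.V) (n : ℕ) : A.V := (A.runStrategy S v n).2

theorem runStrategy_fst (S : A.Strategy) (v : A.V) (n : ℕ) :
    (A.runStrategy S v n).1 = A.hist (A.playOf S v) n := by
  induction n with
  | zero => rfl
  | succ n ih => rw [runStrategy, ih, hist, hist, List.range_succ, List.map_append]; rfl

theorem playOf_succ (S : A.Strategy) (v : A.V) (n : ℕ) :
    A.playOf S v (n + 1) = S (A.hist (A.playOf S v) n) (A.playOf S v n) := by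
  rw [playOf, runStrategy, runStrategy_fst]; rfl

theorem exists_consistent_play {S : A.Strategy} (hS : A.Legal S) (i : Fin 2) (v : A.V) :
    ∃ π, A.IsPlay π ∧ π 0 = v ∧ A.Consistent i S π :=
  ⟨A.playOf S v, fun j => (A.playOf_succ S v j).symm ▸ hS _ _, rfl,
    fun j _ => A.playOf_succ S v j⟩

theorem exists_memoryless_of_injOn {π : ℕ → A.V} (hπ : A.IsPlay π) {n : ℕ}
    (hinj : InjOn π (Iic n)) :
    ∃ S, A.Legal S ∧ A.Memoryless S ∧ ∀ h, ∀ t ≤ n, S h (π t) = π (t + 1) := by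
  let f : Iic n → A.V := fun t => π t
  have hf : Function.Injective f := injOn_iff_injective.1 hinj
  let g : A.V → A.V := Function.extend f (fun t => π (t + 1)) (fun w => (A.nodead w).choose)
  refine ⟨fun _ w => g w, fun _ w => ?_, fun _ _ _ => rfl,
    fun _ t ht => hf.extend_apply _ _ ⟨t, ht⟩⟩
  by_cases hw : ∃ t, f t = w
  · obtain ⟨t, rfl⟩ := hw
    simpa only [g, hf.extend_apply] using hπ t
  · simpa only [g, Function.extend_apply' _ _ _ hw] using (A.nodead w).choose_spec

theorem eq_of_consistent_of_solitaire {i : Fin 2} (hsol : A.SolitaireFor i) {S : A.Strategy}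
    {π π' : ℕ → A.V} {n : ℕ} (hS : ∀ h, ∀ t ≤ n, S h (π t) = π (t + 1))
    (h0 : π' 0 = π 0) (hπ' : A.Consistent i S π') : ∀ t ≤ n + 1, π' t = π t := by
  intro t ht
  induction t with
  | zero => exact h0
  | succ t ih => rw [hπ' t (hsol _), ih (by omega), hS _ t (by omega)]

end Arena

/-- solitaire first cycle games are pointwise memoryless. -/
theorem stmt1 {U : Type} (A : Arena U) (Y : Set (List U)) (i : Fin 2)
    (hsol : A.SolitaireFor i) (v : A.V)
    (hwin : v ∈ A.WinRegion (A.FCObj Y) i) :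
    ∃ S, A.Memoryless S ∧ A.WinsFrom (A.FCObj Y) i S v := by
  obtain ⟨S, hS, hSwin⟩ := hwin
  obtain ⟨π, hπ, hπ0, hπS⟩ := A.exists_consistent_play hS i v
  obtain ⟨n, c, hinj, hfirst⟩ := A.exists_isFirstCycleAt π
  obtain ⟨T, hT, hTmem, hTπ⟩ := A.exists_memoryless_of_injOn hπ hinj
  refine ⟨T, hTmem, hT, fun π' _ hπ'0 hπ'T => ?_⟩
  have hfirst' := hfirst.congr
    (A.eq_of_consistent_of_solitaire hsol hTπ (hπ'0.trans hπ0.symm) hπ'T)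
  have hwinπ := hSwin π hπ hπ0 hπS
  rw [A.FCObj_iff_of_isFirstCycleAt hfirst] at hwinπ
  rwa [A.FCObj_iff_of_isFirstCycleAt hfirst']
end

section
/- There exists a solitaire first cycle game that is not uniform memoryless determined: the controlling player wins pointwise-memoryless from every vertex of his winning region, but no single memoryless strategy is winning from every vertex of the winning region. -/
namespace Arena

variable {U : Type} (A : Arena U)

theorem stackAt_eq_of_nodup {π : ℕ → A.V} {n : ℕ}
    (hnd : ((List.range (n + 1)).map π).Nodup) :
    A.stackAt π n = (List.range (n + 1)).map π := by
  induction n with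
  | zero => rfl
  | succ n ih =>
    rw [List.range_succ, List.map_append, List.map_singleton, ← List.concat_eq_append,
      List.nodup_concat] at hnd
    rw [stackAt, ih hnd.2, step, if_neg hnd.1]
    simp [List.range_succ]

theorem cycleAt_eq_none_of_nodup {π : ℕ → A.V} {n : ℕ}
    (hnd : ((List.range (n + 2)).map π).Nodup) : A.cycleAt π n = none := by
  rw [List.range_succ, List.map_append, List.map_singleton, ← List.concat_eq_append,
    List.nodup_concat] at hnd
  rw [cycleAt, A.stackAt_eq_of_nodup hnd.2, step, if_neg hnd.1]

theorem cycleAt_eq_some_of_nodup {π : ℕ → A.V} {n k : ℕ}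
    (hnd : ((List.range (n + 1)).map π).Nodup) (hk : k ≤ n) (hrep : π (n + 1) = π k) :
    A.cycleAt π n = some (((List.range (n + 1)).map π).drop k) := by
  have hlen : k < ((List.range (n + 1)).map π).length := by
    simp only [List.length_map, List.length_range]; omega
  have hget : ((List.range (n + 1)).map π)[k] = π k := by simp
  have hidx : ((List.range (n + 1)).map π).idxOf (π k) = k := by
    rw [← hget, hnd.idxOf_getElem]
  rw [cycleAt, A.stackAt_eq_of_nodup hnd, step, hrep, if_pos (hget ▸ List.getElem_mem hlen),
    hidx]

theorem fcObj_iff_of_nodup {π : ℕ → A.V} {n k : ℕ} (Y : Set (List U))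
    (hnd : ((List.range (n + 1)).map π).Nodup) (hk : k ≤ n) (hrep : π (n + 1) = π k) :
    A.FCObj Y π ↔ A.cycLabels (((List.range (n + 1)).map π).drop k) ∈ Y := by
  have hnone : ∀ m < n, A.cycleAt π m = none := fun m hm =>
    A.cycleAt_eq_none_of_nodup (hnd.sublist ((List.range_sublist.2 (by omega)).map π))
  constructor
  · rintro ⟨m, c, hc, hbefore, hY⟩
    obtain rfl : m = n := by
      rcases lt_trichotomy m n with h | h | h
      · simp [hnone m h] at hc
      · exact h
      · simpa [A.cycleAt_eq_some_of_nodup hnd hk hrep] using hbefore n h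
    rw [A.cycleAt_eq_some_of_nodup hnd hk hrep, Option.some_inj] at hc
    rwa [hc]
  · exact fun hY => ⟨n, _, A.cycleAt_eq_some_of_nodup hnd hk hrep, hnone, hY⟩

theorem winsFrom_iff_of_memoryless {O : A.Objective} {S : A.Strategy} {v : A.V}
    (hsol : A.SolitaireFor 0) (hS : A.Memoryless S) :
    A.WinsFrom O 0 S v ↔ A.Legal S ∧ O (fun n => (S [])^[n] v) := by
  constructor
  · rintro ⟨hleg, hwin⟩
    refine ⟨hleg, ?_⟩
    have hO := hwin (fun n => (S [])^[n] v)
      (fun j => by dsimp only; rw [Function.iterate_succ_apply']; exact hleg [] _) rfl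
      (fun j _ => by dsimp only; rw [Function.iterate_succ_apply', hS])
    rwa [if_pos rfl] at hO
  · rintro ⟨hleg, hO⟩
    refine ⟨hleg, fun π _ h0 hc => ?_⟩
    have horbit : π = fun n => (S [])^[n] v := by
      funext n
      induction n with
      | zero => exact h0
      | succ n ih => rw [hc n (hsol _), hS, ih, Function.iterate_succ_apply']
    rwa [if_pos rfl, horbit]

end Arena

namespace MaxFirst

/-- Vertex `vᵢ` of the paper is `i - 1 : Fin 3`; the edge leaving `vᵢ` is labelled `i`. -/
abbrev arena : Arena ℕ where
  V := Fin 3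
  finV := inferInstance
  decV := inferInstance
  owner := fun _ => 0
  E := fun a b => (a, b) ∈ [(0, 1), (0, 2), (1, 0), (1, 2), (2, 1)]
  nodead := by decide
  lab := fun a _ => a.val + 1

def cycMaxFirst : Set (List ℕ) := {c | ∀ x ∈ c, x ≤ c.headI}

instance : DecidablePred (· ∈ cycMaxFirst) := fun c =>
  inferInstanceAs (Decidable (∀ x ∈ c, x ≤ c.headI))

abbrev fcMaxFirst : arena.Objective := arena.FCObj cycMaxFirst

def toV3 : Fin 3 → Fin 3 := ![2, 2, 1]

def toV1 : Fin 3 → Fin 3 := ![1, 0, 1]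

theorem winsFrom_iff {f : Fin 3 → Fin 3} {v : Fin 3} :
    arena.WinsFrom fcMaxFirst 0 (fun _ => f) v ↔
      (∀ w, arena.E w (f w)) ∧ fcMaxFirst (fun n => f^[n] v) := by
  rw [arena.winsFrom_iff_of_memoryless (fun _ => rfl) (fun _ _ _ => rfl)]
  exact and_congr_left' ⟨fun h => h [], fun h _ => h⟩

theorem winsFrom_toV3_v1 : arena.WinsFrom fcMaxFirst 0 (fun _ => toV3) 0 :=
  winsFrom_iff.mpr ⟨by decide,
    (arena.fcObj_iff_of_nodup (n := 2) (k := 1) _ (by decide) (by omega) rfl).mpr (by decide)⟩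

theorem winsFrom_toV3_v3 : arena.WinsFrom fcMaxFirst 0 (fun _ => toV3) 2 :=
  winsFrom_iff.mpr ⟨by decide,
    (arena.fcObj_iff_of_nodup (n := 1) (k := 0) _ (by decide) (by omega) rfl).mpr (by decide)⟩

theorem winsFrom_toV1_v2 : arena.WinsFrom fcMaxFirst 0 (fun _ => toV1) 1 :=
  winsFrom_iff.mpr ⟨by decide,
    (arena.fcObj_iff_of_nodup (n := 1) (k := 0) _ (by decide) (by omega) rfl).mpr (by decide)⟩

theorem legal_cases (f : Fin 3 → Fin 3) (h : ∀ v, arena.E v (f v)) :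
    f = ![1, 0, 1] ∨ f = ![2, 0, 1] ∨ f = ![1, 2, 1] ∨ f = ![2, 2, 1] := by
  revert f; decide

theorem not_winsFrom_v1_and_v2 (f : Fin 3 → Fin 3) :
    ¬ (arena.WinsFrom fcMaxFirst 0 (fun _ => f) 0 ∧
      arena.WinsFrom fcMaxFirst 0 (fun _ => f) 1) := by
  simp only [winsFrom_iff]
  rintro ⟨⟨hf, h1⟩, -, h2⟩
  -- The first cycles are v₁v₂, v₁v₃v₂, v₂v₃ and v₂v₃ respectively.
  rcases legal_cases f hf with rfl | rfl | rfl | rfl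
  · exact absurd ((arena.fcObj_iff_of_nodup (n := 1) (k := 0) _ (by decide) (by omega) rfl).mp h1)
      (by decide)
  · exact absurd ((arena.fcObj_iff_of_nodup (n := 2) (k := 0) _ (by decide) (by omega) rfl).mp h1)
      (by decide)
  · exact absurd ((arena.fcObj_iff_of_nodup (n := 1) (k := 0) _ (by decide) (by omega) rfl).mp h2)
      (by decide)
  · exact absurd ((arena.fcObj_iff_of_nodup (n := 1) (k := 0) _ (by decide) (by omega) rfl).mp h2)
      (by decide)

theorem pointwiseMemoryless : arena.PointwiseMemoryless fcMaxFirst 0 := by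
  intro v _
  fin_cases v
  · exact ⟨_, fun _ _ _ => rfl, winsFrom_toV3_v1⟩
  · exact ⟨_, fun _ _ _ => rfl, winsFrom_toV1_v2⟩
  · exact ⟨_, fun _ _ _ => rfl, winsFrom_toV3_v3⟩

theorem not_uniformMemoryless : ¬ arena.UniformMemoryless fcMaxFirst 0 := by
  rintro ⟨S, hS, hwin⟩
  have hS' : S = fun _ => S [] := funext fun h => funext (hS h [])
  rw [hS'] at hwin
  exact not_winsFrom_v1_and_v2 (S [])
    ⟨hwin 0 ⟨_, winsFrom_toV3_v1⟩, hwin 1 ⟨_, winsFrom_toV1_v2⟩⟩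

end MaxFirst

/-- a solitaire first cycle game that is pointwise memoryless
for its controlling player but not uniform memoryless. -/
theorem stmt2 :
    ∃ (A : Arena ℕ) (Y : Set (List ℕ)) (i : Fin 2),
      A.SolitaireFor i ∧
      A.PointwiseMemoryless (A.FCObj Y) i ∧
      ¬ A.UniformMemoryless (A.FCObj Y) i :=
  ⟨MaxFirst.arena, MaxFirst.cycMaxFirst, 0, fun _ => rfl, MaxFirst.pointwiseMemoryless,
    MaxFirst.not_uniformMemoryless⟩
end

section
/- Transfer theorem, strategies: if the game (A, O) is Y-greedy, then for each player i, a memoryless strategy S for Player i is winning from vertex v in (A, O) if and only if S is winning from v in the first cycle game (A, O_FC(Y)(A)). -/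
/-! The stack of the cycles decomposition is always a simple path from the initial vertex, made of
steps of the play. When a cycle `c` is popped, the stack plus the current move is a path that
closes back into itself; walking it and then looping on `c` forever gives a play whose only
cycle is `c`. For a memoryless strategy, consistency is a property of single moves, so this
lasso is consistent whenever the original play is. Hence every cycle of a consistent play from
`v` is the first cycle of some consistent play from `v`, and `Y`-greediness transfers winning
between `O` and the first cycle game in both directions (for Player 1 via `Yᶜ` and `¬ O`). -/

namespace Arena

variable {U : Type} {A : Arena U}

section Decomposition

variable {π : ℕ → A.V}

lemma step_of_mem {s : List A.V} {v : A.V} (h : v ∈ s) :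
    A.step s v = (s.take (s.idxOf v + 1), some (s.drop (s.idxOf v))) := by
  simp [step, h]

lemma step_of_not_mem {s : List A.V} {v : A.V} (h : v ∉ s) :
    A.step s v = (s ++ [v], none) := by
  simp [step, h]

lemma cycleAt_eq_some_iff {n : ℕ} {c : List A.V} :
    A.cycleAt π n = some c ↔
      π (n + 1) ∈ A.stackAt π n ∧
        c = (A.stackAt π n).drop ((A.stackAt π n).idxOf (π (n + 1))) := by
  by_cases h : π (n + 1) ∈ A.stackAt π n
  · simp [cycleAt, step_of_mem h, h, eq_comm]
  · simp [cycleAt, step_of_not_mem h, h]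

lemma stackAt_succ_of_cycleAt_eq_none {n : ℕ} (h : A.cycleAt π n = none) :
    A.stackAt π (n + 1) = A.stackAt π n ++ [π (n + 1)] := by
  have hmem : π (n + 1) ∉ A.stackAt π n := by
    intro hmem
    simp [cycleAt, step_of_mem hmem] at h
  exact congrArg Prod.fst (step_of_not_mem hmem)

lemma stackAt_nodup (n : ℕ) : (A.stackAt π n).Nodup := by
  induction n with
  | zero => exact List.nodup_singleton _
  | succ n ih =>
    by_cases h : π (n + 1) ∈ A.stackAt π n
    · simpa [stackAt, step_of_mem h] using ih.sublist (List.take_sublist _ _)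
    · simpa [stackAt, step_of_not_mem h, List.nodup_append] using
        ⟨ih, fun a ha hav => h (hav ▸ ha)⟩

lemma head?_stackAt (n : ℕ) : (A.stackAt π n).head? = some (π 0) := by
  induction n with
  | zero => rfl
  | succ n ih =>
    by_cases h : π (n + 1) ∈ A.stackAt π n
    · simp [stackAt, step_of_mem h, List.head?_take, ih]
    · simp [stackAt, step_of_not_mem h, List.head?_append, ih]

lemma getLast?_stackAt (n : ℕ) : (A.stackAt π n).getLast? = some (π n) := by
  cases n with
  | zero => rfl
  | succ n =>
    by_cases h : π (n + 1) ∈ A.stackAt π n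
    · have hlt := List.idxOf_lt_length_iff.mpr h
      simp [stackAt, step_of_mem h, List.getLast?_take, List.getElem?_eq_getElem hlt,
        List.getElem_idxOf hlt]
    · simp [stackAt, step_of_not_mem h]

lemma isChain_stackAt {G : A.V → A.V → Prop} (hG : ∀ k, G (π k) (π (k + 1))) (n : ℕ) :
    (A.stackAt π n).IsChain G := by
  induction n with
  | zero => exact List.isChain_singleton _
  | succ n ih =>
    by_cases h : π (n + 1) ∈ A.stackAt π n
    · simpa [stackAt, step_of_mem h] using ih.take _
    · simp only [stackAt, step_of_not_mem h]
      refine ih.append (List.isChain_singleton _) ?_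
      simpa [getLast?_stackAt] using hG n

lemma exists_cycleAt_eq_some (π : ℕ → A.V) : ∃ n c, A.cycleAt π n = some c := by
  by_contra! hnone
  have hlen : ∀ n, (A.stackAt π n).length = n + 1 := by
    intro n
    induction n with
    | zero => rfl
    | succ n ih =>
      rw [stackAt_succ_of_cycleAt_eq_none (Option.eq_none_iff_forall_ne_some.mpr (hnone n)),
        List.length_append, ih, List.length_singleton]
  have := (stackAt_nodup (π := π) (Fintype.card A.V)).length_le_card
  rw [hlen] at this
  omega

end Decomposition

section FirstCycle

def IsFirstCycle (π : ℕ → A.V) (c : List A.V) : Prop :=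
  ∃ n, A.cycleAt π n = some c ∧ ∀ m < n, A.cycleAt π m = none

lemma exists_isFirstCycle (π : ℕ → A.V) : ∃ c, A.IsFirstCycle π c := by
  classical
  have hex : ∃ n, (A.cycleAt π n).isSome := by
    obtain ⟨n, c, hc⟩ := exists_cycleAt_eq_some π
    exact ⟨n, by simp [hc]⟩
  obtain ⟨c, hc⟩ := Option.isSome_iff_exists.mp (Nat.find_spec hex)
  exact ⟨c, Nat.find hex, hc, fun m hm => by simpa using Nat.find_min hex hm⟩

lemma IsFirstCycle.unique {π : ℕ → A.V} {c c' : List A.V} (h : A.IsFirstCycle π c)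
    (h' : A.IsFirstCycle π c') : c = c' := by
  obtain ⟨n, hn, hbefore⟩ := h
  obtain ⟨n', hn', hbefore'⟩ := h'
  rcases lt_trichotomy n n' with hlt | rfl | hlt
  · simp [hbefore' n hlt] at hn
  · exact Option.some_injective _ (hn.symm.trans hn')
  · simp [hbefore n' hlt] at hn'

lemma fcObj_iff {Y : Set (List U)} {π : ℕ → A.V} :
    A.FCObj Y π ↔ ∃ c, A.IsFirstCycle π c ∧ A.cycLabels c ∈ Y := by
  constructor
  · rintro ⟨n, c, hn, hbefore, hY⟩
    exact ⟨c, ⟨n, hn, hbefore⟩, hY⟩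
  · rintro ⟨c, ⟨n, hn, hbefore⟩, hY⟩
    exact ⟨n, c, hn, hbefore, hY⟩

lemma fcObj_compl {Y : Set (List U)} {π : ℕ → A.V} : A.FCObj Yᶜ π ↔ ¬ A.FCObj Y π := by
  obtain ⟨c, hc⟩ := exists_isFirstCycle π
  simp only [fcObj_iff]
  constructor
  · rintro ⟨c₁, hc₁, hY₁⟩ ⟨c₂, hc₂, hY₂⟩
    exact hY₁ (hc₁.unique hc₂ ▸ hY₂)
  · intro hnot
    exact ⟨c, hc, fun hY => hnot ⟨c, hc, hY⟩⟩

end FirstCycle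

section Periodic

variable {π : ℕ → A.V}

lemma stackAt_eq_take_of_nodup {q : List A.V} (hq : q.Nodup)
    (hπ : ∀ k (hk : k < q.length), π k = q[k]) {m : ℕ} (hm : m < q.length) :
    A.stackAt π m = q.take (m + 1) ∧ ∀ k < m, A.cycleAt π k = none := by
  induction m with
  | zero =>
    simp [stackAt, hπ 0 hm, List.take_one, List.head?_eq_getElem?, List.getElem?_eq_getElem hm]
  | succ m ih =>
    obtain ⟨hstack, hnone⟩ := ih (by omega)
    have hnodup : (q.take (m + 1) ++ [q[m + 1]]).Nodup := by
      rw [← List.take_succ_eq_append_getElem hm]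
      exact hq.sublist (List.take_sublist _ _)
    have hfresh : π (m + 1) ∉ A.stackAt π m := by
      rw [hstack, hπ _ hm]
      exact fun hmem => (List.nodup_append.mp hnodup).2.2 _ hmem _ (List.mem_singleton_self _) rfl
    refine ⟨?_, fun k hk => ?_⟩
    · show (A.step (A.stackAt π m) (π (m + 1))).1 = _
      rw [step_of_not_mem hfresh, hstack, hπ _ hm]
      exact (List.take_succ_eq_append_getElem hm).symm
    · rcases Nat.lt_succ_iff_lt_or_eq.mp hk with hk | rfl
      · exact hnone k hk
      · simp [cycleAt, step_of_not_mem hfresh]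

lemma stackAt_add_of_periodic {p T : ℕ} (hper : ∀ m ≥ p, π (m + T) = π m)
    (hstack : A.stackAt π (p + T) = A.stackAt π p) {m : ℕ} (hm : p ≤ m) :
    A.stackAt π (m + T) = A.stackAt π m := by
  induction m, hm using Nat.le_induction with
  | base => exact hstack
  | succ m hm ih =>
    rw [Nat.add_right_comm]
    simp only [stackAt, ih]
    rw [Nat.add_right_comm, hper (m + 1) (by omega)]

lemma cycleAt_add_of_periodic {p T : ℕ} (hper : ∀ m ≥ p, π (m + T) = π m)
    (hstack : A.stackAt π (p + T) = A.stackAt π p) {m : ℕ} (hm : p ≤ m) :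
    A.cycleAt π (m + T) = A.cycleAt π m := by
  simp only [cycleAt, stackAt_add_of_periodic hper hstack hm, Nat.add_right_comm m T 1,
    hper (m + 1) (by omega)]

end Periodic

def lassoIndex (L p m : ℕ) : ℕ := if m < p then m else p + (m - p) % (L - p)

/-- The play that walks along `q` and then loops forever on the suffix of `q` starting at `x`. -/
def lasso {α : Type*} [BEq α] (q : List α) (x : α) (m : ℕ) : α :=
  q.getD (lassoIndex q.length (q.idxOf x) m) x

section LassoPlay

variable {α : Type*} [BEq α] {q : List α} {x : α}

lemma lasso_of_lt {m : ℕ} (hm : m < q.length) : lasso q x m = q[m] := by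
  have : lassoIndex q.length (q.idxOf x) m = m := by
    unfold lassoIndex
    split_ifs
    · rfl
    · rw [Nat.mod_eq_of_lt (by omega)]
      omega
  rw [lasso, this, List.getD_eq_getElem _ _ hm]

lemma lasso_zero : lasso q x 0 = q.headD x := by
  have : lassoIndex q.length (q.idxOf x) 0 = 0 := by
    unfold lassoIndex
    split_ifs with h
    · rfl
    · simp [Nat.eq_zero_of_not_pos h]
  rw [lasso, this, List.headD_eq_getD]

lemma lasso_length [LawfulBEq α] (hx : x ∈ q) : lasso q x q.length = x := by
  have hlt := List.idxOf_lt_length_iff.mpr hx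
  have : lassoIndex q.length (q.idxOf x) q.length = q.idxOf x := by
    simp [lassoIndex, Nat.not_lt.mpr hlt.le]
  rw [lasso, this, List.getD_eq_getElem _ _ hlt, List.getElem_idxOf]

lemma lasso_add_period {m : ℕ} (hm : q.idxOf x ≤ m) :
    lasso q x (m + (q.length - q.idxOf x)) = lasso q x m := by
  simp [lasso, lassoIndex, Nat.not_lt.mpr hm, Nat.not_lt.mpr (hm.trans (Nat.le_add_right m _)),
    Nat.sub_add_comm hm]

lemma lasso_rel [LawfulBEq α] {G : α → α → Prop} (hx : x ∈ q)
    (hchain : (q ++ [x]).IsChain G) (k : ℕ) :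
    G (lasso q x k) (lasso q x (k + 1)) := by
  have hp := List.idxOf_lt_length_iff.mpr hx
  have hpath : ∀ m (hm : m ≤ q.length), lasso q x m = (q ++ [x])[m]'(by simp; omega) := by
    intro m hm
    rcases hm.lt_or_eq with hm | rfl
    · rw [lasso_of_lt hm, List.getElem_append_left]
    · simp [lasso_length hx]
  induction k using Nat.strong_induction_on with
  | _ k ih =>
    by_cases hk : k < q.length
    · rw [hpath k hk.le, hpath (k + 1) hk]
      exact List.isChain_iff_getElem.mp hchain k (by simp; omega)
    · set T := q.length - q.idxOf x
      have hk' : k - T + T = k := by omega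
      have e₀ := lasso_add_period (x := x) (show q.idxOf x ≤ k - T by omega)
      have e₁ := lasso_add_period (x := x) (show q.idxOf x ≤ k - T + 1 by omega)
      rw [hk'] at e₀
      rw [Nat.add_right_comm, hk'] at e₁
      rw [e₀, e₁]
      exact ih _ (by omega)

end LassoPlay

section Lasso

variable {q : List A.V} {x : A.V}

lemma stackAt_lasso_of_lt (hq : q.Nodup) {m : ℕ} (hm : m < q.length) :
    A.stackAt (lasso q x) m = q.take (m + 1) ∧ ∀ k < m, A.cycleAt (lasso q x) k = none :=
  stackAt_eq_take_of_nodup hq (fun _ hk => lasso_of_lt hk) hm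

lemma step_stackAt_lasso (hq : q.Nodup) (hx : x ∈ q) :
    A.step (A.stackAt (lasso q x) (q.length - 1)) (lasso q x (q.length - 1 + 1)) =
      (A.stackAt (lasso q x) (q.idxOf x), some (q.drop (q.idxOf x))) := by
  have hpos := List.length_pos_of_mem hx
  have hfull := (stackAt_lasso_of_lt (x := x) hq (m := q.length - 1) (by omega)).1
  rw [Nat.sub_add_cancel hpos, List.take_length] at hfull
  rw [hfull, Nat.sub_add_cancel hpos, lasso_length hx, step_of_mem hx,
    (stackAt_lasso_of_lt hq (List.idxOf_lt_length_iff.mpr hx)).1]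

lemma isFirstCycle_lasso (hq : q.Nodup) (hx : x ∈ q) :
    A.IsFirstCycle (lasso q x) (q.drop (q.idxOf x)) :=
  ⟨q.length - 1, congrArg Prod.snd (step_stackAt_lasso hq hx),
    (stackAt_lasso_of_lt hq (by have := List.length_pos_of_mem hx; omega)).2⟩

lemma stackAt_lasso_length (hq : q.Nodup) (hx : x ∈ q) :
    A.stackAt (lasso q x) q.length = A.stackAt (lasso q x) (q.idxOf x) := by
  have h : A.stackAt (lasso q x) (q.length - 1 + 1) = _ :=
    congrArg Prod.fst (step_stackAt_lasso hq hx)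
  rwa [Nat.sub_add_cancel (List.length_pos_of_mem hx)] at h

lemma eq_of_cycleAt_lasso (hq : q.Nodup) (hx : x ∈ q) {m : ℕ} {c : List A.V}
    (hc : A.cycleAt (lasso q x) m = some c) : c = q.drop (q.idxOf x) := by
  have hp := List.idxOf_lt_length_iff.mpr hx
  have hn : A.cycleAt (lasso q x) (q.length - 1) = some (q.drop (q.idxOf x)) :=
    congrArg Prod.snd (step_stackAt_lasso hq hx)
  have hbefore := (stackAt_lasso_of_lt (x := x) hq (m := q.length - 1) (by omega)).2
  have hreturn : A.stackAt (lasso q x) (q.idxOf x + (q.length - q.idxOf x)) =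
      A.stackAt (lasso q x) (q.idxOf x) := by
    rw [Nat.add_sub_cancel' hp.le, stackAt_lasso_length hq hx]
  induction m using Nat.strong_induction_on with
  | _ m ih =>
    rcases lt_trichotomy m (q.length - 1) with hm | rfl | hm
    · simp [hbefore m hm] at hc
    · exact Option.some_injective _ (hc.symm.trans hn)
    · rw [← Nat.sub_add_cancel (show q.length - q.idxOf x ≤ m by omega),
        cycleAt_add_of_periodic (fun k hk => lasso_add_period hk) hreturn (by omega)] at hc
      exact ih _ (by omega) hc

end Lasso

section Memoryless

def ConsistentEdge (i : Fin 2) (S : A.Strategy) (u w : A.V) : Prop :=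
  A.E u w ∧ (A.owner u = i → w = S [] u)

lemma isPlay_and_consistent_iff {i : Fin 2} {S : A.Strategy} (hS : A.Memoryless S)
    {π : ℕ → A.V} :
    A.IsPlay π ∧ A.Consistent i S π ↔ ∀ k, A.ConsistentEdge i S (π k) (π (k + 1)) :=
  ⟨fun ⟨hπ, hcons⟩ k => ⟨hπ k, fun ho => (hcons k ho).trans (hS _ _ _)⟩,
    fun h => ⟨fun k => (h k).1, fun k ho => ((h k).2 ho).trans (hS _ _ _)⟩⟩

lemma exists_consistent_lasso {i : Fin 2} {S : A.Strategy} (hS : A.Memoryless S)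
    {π : ℕ → A.V} (hπ : A.IsPlay π) (hcons : A.Consistent i S π) {n : ℕ} {c : List A.V}
    (hc : A.cycleAt π n = some c) :
    ∃ π', A.IsPlay π' ∧ π' 0 = π 0 ∧ A.Consistent i S π' ∧
      (∀ m c', A.cycleAt π' m = some c' → c' = c) ∧ A.IsFirstCycle π' c := by
  have hG := (isPlay_and_consistent_iff hS).mp ⟨hπ, hcons⟩
  obtain ⟨hx, rfl⟩ := cycleAt_eq_some_iff.mp hc
  have hchain : (A.stackAt π n ++ [π (n + 1)]).IsChain (A.ConsistentEdge i S) :=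
    (isChain_stackAt hG n).append (List.isChain_singleton _)
      (by simpa [getLast?_stackAt] using hG n)
  obtain ⟨hπ', hcons'⟩ := (isPlay_and_consistent_iff hS).mpr (lasso_rel hx hchain)
  refine ⟨_, hπ', ?_, hcons', fun m c' => eq_of_cycleAt_lasso (stackAt_nodup n) hx,
    isFirstCycle_lasso (stackAt_nodup n) hx⟩
  simp [lasso_zero, head?_stackAt]

lemma YGreedy.compl {Y : Set (List U)} {O : A.Objective} (h : A.YGreedy Y O) :
    A.YGreedy Yᶜ (fun π => ¬ O π) :=
  ⟨h.2, fun π hπ hAC => not_not.mpr (h.1 π hπ (by simpa only [compl_compl] using hAC))⟩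

theorem forall_consistent_obj_iff_fcObj {Y : Set (List U)} {O : A.Objective}
    (h : A.YGreedy Y O) {i : Fin 2} {S : A.Strategy} (hS : A.Memoryless S) {v : A.V} :
    (∀ π, A.IsPlay π → π 0 = v → A.Consistent i S π → O π) ↔
      ∀ π, A.IsPlay π → π 0 = v → A.Consistent i S π → A.FCObj Y π := by
  constructor
  · intro hO π hπ h0 hcons
    obtain ⟨c, hfirst⟩ := exists_isFirstCycle π
    refine fcObj_iff.mpr ⟨c, hfirst, by_contra fun hY => ?_⟩
    obtain ⟨n, hn, -⟩ := hfirst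
    obtain ⟨π', hπ', h0', hcons', hall, -⟩ := exists_consistent_lasso hS hπ hcons hn
    refine h.2 π' hπ' (fun m c' hc' => ?_) (hO π' hπ' (h0'.trans h0) hcons')
    rwa [hall m c' hc']
  · intro hFC π hπ h0 hcons
    refine h.1 π hπ fun n c hc => ?_
    obtain ⟨π', hπ', h0', hcons', -, hfirst⟩ := exists_consistent_lasso hS hπ hcons hc
    obtain ⟨c', hfirst', hY⟩ := fcObj_iff.mp (hFC π' hπ' (h0'.trans h0) hcons')
    rwa [hfirst.unique hfirst']

end Memoryless

end Arena

/-- Transfer, strategies: a memoryless strategy wins a Y-greedy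
game from v iff it wins the first cycle game of Y from v. -/
theorem stmt7 {U : Type} (A : Arena U) (Y : Set (List U)) (O : A.Objective)
    (h : A.YGreedy Y O) (i : Fin 2) (S : A.Strategy) (hS : A.Memoryless S)
    (v : A.V) :
    A.WinsFrom O i S v ↔ A.WinsFrom (A.FCObj Y) i S v := by
  refine and_congr_right fun _ => ?_
  fin_cases i
  · simpa using Arena.forall_consistent_obj_iff_fcObj h hS
  · simpa [Arena.fcObj_compl] using Arena.forall_consistent_obj_iff_fcObj h.compl hS
end

section
/- The parity winning condition is cyc-Parity-greedy on every arena: if every cycle in the cycles-decomposition of a play has even maximal priority, then the largest priority occurring infinitely often in the play is even; and if every cycle in the decomposition has odd maximal priority, then the largest priority occurring infinitely often is odd. -/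
/-- `cyc-Parity`: the maximal label of the (nonempty) finite sequence is even. -/
def cycParity : Set (List ℕ) := { l | ∃ m ∈ l, (∀ x ∈ l, x ≤ m) ∧ Even m }

/-- `p` is the largest value occurring infinitely often in `c`. -/
def InfOftenMax (c : ℕ → ℕ) (p : ℕ) : Prop :=
  (∀ n, ∃ m, n ≤ m ∧ c m = p) ∧ ∀ q, (∀ n, ∃ m, n ≤ m ∧ c m = q) → q ≤ p

/-!
Let `p` be the largest label occurring infinitely often and `N` a time after which no label
exceeds `p`. Tag every stack entry with the time it was pushed: the cycle popped at time `n`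
consists of the closing edge `π n → π (n + 1)` and of the edges that pushed the popped entries.
The entries pushed up to time `N` are only ever removed, so after some time `M` none of them is
popped any more, and every cycle output after `M` uses only edges taken after `N`: its labels are
all `≤ p`. On the other hand an edge lying on no output cycle pushes an entry that stays on the
stack for ever, and the stack never holds more than `|V|` entries, so all but finitely many edges
lie on an output cycle. An edge labelled `p` after time `M` thus yields an output cycle whose
maximal label is exactly `p`, and the parity of that cycle is the parity of the play.
-/

open Filter

theorem List.zipWith_cons_append_eq_map_of_isChain {α β : Type*} {R : α → α → Prop}
    {F : α → α → β} {g : α → β} (hFg : ∀ a b, R a b → F a b = g b) :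
    ∀ {a b : α} {l : List α}, (a :: l ++ [b]).IsChain R →
      List.zipWith F (a :: l) (l ++ [b]) = (l ++ [b]).map g
  | a, b, [], h => by simp [hFg a b (List.isChain_pair.1 h)]
  | a, b, c :: l, h => by
    rw [List.cons_append, List.cons_append, List.isChain_cons_cons, ← List.cons_append] at h
    rw [List.cons_append, List.zipWith_cons_cons, hFg a c h.1,
      List.zipWith_cons_append_eq_map_of_isChain hFg h.2]
    rfl

theorem List.Nodup.mem_drop_iff {α : Type*} {l : List α} (hl : l.Nodup) {k : ℕ} {a : α} :
    a ∈ l.drop k ↔ a ∈ l ∧ a ∉ l.take k := by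
  refine ⟨fun h => ⟨List.mem_of_mem_drop h, fun h' => List.disjoint_take_drop hl le_rfl h' h⟩,
    fun ⟨h, h'⟩ => ?_⟩
  rw [← List.take_append_drop k l, List.mem_append] at h
  exact h.resolve_left h'

theorem exists_frequently_eq_eventually_le {U : Type*} [LinearOrder U] {c : ℕ → U}
    (hc : (Set.range c).Finite) : ∃ p, (∃ᶠ j in atTop, c j = p) ∧ ∀ᶠ j in atTop, c j ≤ p := by
  have avoid : ∀ B ⊆ Set.range c, (∀ q ∈ B, ¬∃ᶠ j in atTop, c j = q) → ∀ᶠ j in atTop, c j ∉ B :=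
    fun B hB h => ((hc.subset hB).eventually_all.2 fun q hq => not_frequently.1 (h q hq)).mono
      fun j hj hjB => hj _ hjB rfl
  set S := {q ∈ Set.range c | ∃ᶠ j in atTop, c j = q}
  have hS : S.Nonempty := by
    by_contra hS
    obtain ⟨j, hj⟩ := (avoid _ subset_rfl fun q hq hfreq => hS ⟨q, hq, hfreq⟩).exists
    exact hj ⟨j, rfl⟩
  obtain ⟨p, ⟨-, hp⟩, hmax⟩ := Set.exists_max_image S id (hc.subset (Set.sep_subset _ _)) hS
  refine ⟨p, hp, ?_⟩
  filter_upwards [avoid (Set.range c ∩ Set.Ioi p) Set.inter_subset_left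
    fun q ⟨hq, hpq⟩ hfreq => (hmax q ⟨hq, hfreq⟩).not_gt hpq] with j hj
  exact not_lt.1 fun hpj => hj ⟨⟨j, rfl⟩, hpj⟩

theorem infOftenMax_of_frequently_of_eventually {c : ℕ → ℕ} {p : ℕ}
    (hfreq : ∃ᶠ j in atTop, c j = p) (hle : ∀ᶠ j in atTop, c j ≤ p) : InfOftenMax c p :=
  ⟨frequently_atTop.1 hfreq, fun _ hq =>
    ((frequently_atTop.2 hq).and_eventually hle).exists.elim fun _ ⟨hj, hjp⟩ => hj ▸ hjp⟩

theorem mem_cycParity_iff {l : List ℕ} {p : ℕ} (hp : IsGreatest {x | x ∈ l} p) :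
    l ∈ cycParity ↔ Even p :=
  ⟨fun ⟨_, hm, hle, he⟩ => le_antisymm (hp.2 hm) (hle p hp.1) ▸ he, fun he => ⟨p, hp.1, hp.2, he⟩⟩

namespace Arena

variable {U : Type} (A : Arena U) (π : ℕ → A.V)

/-- The times at which the entries of `A.stackAt π n` were pushed, bottom first. -/
def pushTimes : ℕ → List ℕ
  | 0 => [0]
  | n + 1 =>
    if π (n + 1) ∈ A.stackAt π n then
      (pushTimes n).take ((A.stackAt π n).idxOf (π (n + 1)) + 1)
    else pushTimes n ++ [n + 1]

def labelAt (j : ℕ) : U := A.lab (π j) (π (j + 1))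

variable {A π}

theorem stackAt_succ_of_mem {n : ℕ} (h : π (n + 1) ∈ A.stackAt π n) :
    A.stackAt π (n + 1) = (A.stackAt π n).take ((A.stackAt π n).idxOf (π (n + 1)) + 1) := by
  simp [stackAt, step, h]

theorem stackAt_succ_of_notMem {n : ℕ} (h : π (n + 1) ∉ A.stackAt π n) :
    A.stackAt π (n + 1) = A.stackAt π n ++ [π (n + 1)] := by
  simp [stackAt, step, h]

theorem pushTimes_succ_of_mem {n : ℕ} (h : π (n + 1) ∈ A.stackAt π n) :
    A.pushTimes π (n + 1) = (A.pushTimes π n).take ((A.stackAt π n).idxOf (π (n + 1)) + 1) := by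
  simp [pushTimes, h]

theorem pushTimes_succ_of_notMem {n : ℕ} (h : π (n + 1) ∉ A.stackAt π n) :
    A.pushTimes π (n + 1) = A.pushTimes π n ++ [n + 1] := by
  simp [pushTimes, h]

theorem cycleAt_of_mem {n : ℕ} (h : π (n + 1) ∈ A.stackAt π n) :
    A.cycleAt π n = some ((A.stackAt π n).drop ((A.stackAt π n).idxOf (π (n + 1)))) := by
  simp [cycleAt, step, h]

theorem stackAt_eq_map_pushTimes (π : ℕ → A.V) (n : ℕ) :
    A.stackAt π n = (A.pushTimes π n).map π := by
  induction n with
  | zero => rfl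
  | succ n ih =>
    by_cases h : π (n + 1) ∈ A.stackAt π n
    · rw [stackAt_succ_of_mem h, pushTimes_succ_of_mem h, List.map_take, ← ih]
    · rw [stackAt_succ_of_notMem h, pushTimes_succ_of_notMem h, List.map_append, ih]
      rfl

theorem idxOf_stackAt_lt_length {n : ℕ} (h : π (n + 1) ∈ A.stackAt π n) :
    (A.stackAt π n).idxOf (π (n + 1)) < (A.pushTimes π n).length := by
  simpa [stackAt_eq_map_pushTimes] using List.idxOf_lt_length_iff.2 h

theorem apply_getElem_pushTimes_idxOf {n : ℕ} (h : π (n + 1) ∈ A.stackAt π n) :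
    π ((A.pushTimes π n)[(A.stackAt π n).idxOf (π (n + 1))]'(idxOf_stackAt_lt_length h)) =
      π (n + 1) := by
  have h' := List.getElem_idxOf (List.idxOf_lt_length_iff.2 h)
  rwa [List.getElem_of_eq (stackAt_eq_map_pushTimes π n), List.getElem_map] at h'

theorem nodup_stackAt (π : ℕ → A.V) (n : ℕ) : (A.stackAt π n).Nodup := by
  induction n with
  | zero => exact List.nodup_singleton _
  | succ n ih =>
    by_cases h : π (n + 1) ∈ A.stackAt π n
    · rw [stackAt_succ_of_mem h]
      exact ih.sublist (List.take_sublist _ _)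
    · rw [stackAt_succ_of_notMem h]
      exact ih.append (List.nodup_singleton _) (by simpa using h)

theorem length_pushTimes_le_card (π : ℕ → A.V) (n : ℕ) :
    (A.pushTimes π n).length ≤ Fintype.card A.V := by
  rw [← List.length_map (f := π), ← stackAt_eq_map_pushTimes]
  exact (nodup_stackAt π n).length_le_card

/-- For consecutive push times `a < b`, the entry pushed at time `b` was pushed on top of the
one pushed at time `a`, along the edge `π (b - 1) → π b` of the play. -/
theorem isChain_pushTimes (π : ℕ → A.V) (n : ℕ) :
    (A.pushTimes π n ++ [n + 1]).IsChain (fun a b => a < b ∧ π a = π (b - 1)) := by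
  induction n with
  | zero => simp [pushTimes]
  | succ n ih =>
    by_cases h : π (n + 1) ∈ A.stackAt π n
    · have hi := idxOf_stackAt_lt_length h
      have hsorted : (A.pushTimes π n ++ [n + 1]).Pairwise (· < ·) :=
        List.isChain_iff_pairwise.1 (ih.imp fun _ _ hab => hab.1)
      have hlt : (A.pushTimes π n)[(A.stackAt π n).idxOf (π (n + 1))] < n + 1 :=
        (List.pairwise_append.1 hsorted).2.2 _ (List.getElem_mem hi) (n + 1) (by simp)
      rw [pushTimes_succ_of_mem h]
      refine List.IsChain.append ?_ (List.isChain_singleton _) ?_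
      · rw [← List.take_append_of_le_length hi]
        exact ih.take _
      · simpa [List.getLast?_take, hi, apply_getElem_pushTimes_idxOf h] using hlt.le
    · rw [pushTimes_succ_of_notMem h]
      exact ih.append (List.isChain_singleton _) (by simp)

theorem exists_cycleAt_of_mem {n : ℕ} (h : π (n + 1) ∈ A.stackAt π n) :
    ∃ k cy, A.pushTimes π (n + 1) = (A.pushTimes π n).take k ∧ A.cycleAt π n = some cy ∧
      A.cycLabels cy =
        ((A.pushTimes π n).drop k ++ [n + 1]).map (fun t => A.labelAt π (t - 1)) := by
  have hi := idxOf_stackAt_lt_length h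
  have hπi : π ((A.pushTimes π n)[_]'hi) = π (n + 1) := apply_getElem_pushTimes_idxOf h
  refine ⟨_, _, pushTimes_succ_of_mem h, cycleAt_of_mem h, ?_⟩
  generalize (A.stackAt π n).idxOf (π (n + 1)) = i at hi hπi ⊢
  have hdrop := List.drop_eq_getElem_cons hi
  have hchain := (isChain_pushTimes π n).drop i
  rw [List.drop_append_of_le_length hi.le, hdrop] at hchain
  rw [stackAt_eq_map_pushTimes, ← List.map_drop, hdrop]
  generalize (A.pushTimes π n)[i] = t at hπi hchain ⊢
  generalize (A.pushTimes π n).drop (i + 1) = ts at hchain ⊢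
  calc A.cycLabels ((t :: ts).map π)
      = List.zipWith A.lab ((t :: ts).map π) ((ts ++ [n + 1]).map π) := by
        simp [cycLabels, hπi]
    _ = _ := by
      rw [List.zipWith_map]
      refine List.zipWith_cons_append_eq_map_of_isChain (fun a b hab => ?_) hchain
      rw [labelAt, Nat.sub_add_cancel (by omega : 1 ≤ b), hab.2]

theorem nodup_pushTimes (π : ℕ → A.V) (n : ℕ) : (A.pushTimes π n).Nodup :=
  ((List.isChain_iff_pairwise.1 ((isChain_pushTimes π n).imp fun _ _ h => h.1)).sublist
    (List.sublist_append_left _ _)).imp ne_of_lt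

theorem mem_cycLabels_cycleAt {n : ℕ} {cy : List A.V} (hcy : A.cycleAt π n = some cy) {x : U} :
    x ∈ A.cycLabels cy ↔ x = A.labelAt π n ∨
      ∃ t ∈ A.pushTimes π n, t ∉ A.pushTimes π (n + 1) ∧ x = A.labelAt π (t - 1) := by
  have h : π (n + 1) ∈ A.stackAt π n := by
    by_contra h
    simp [cycleAt, step, h] at hcy
  obtain ⟨k, cy', htake, hcy', hlab⟩ := exists_cycleAt_of_mem h
  obtain rfl : cy = cy' := Option.some_injective _ (hcy.symm.trans hcy')
  simp only [hlab, htake, List.mem_map, List.mem_append, List.mem_singleton,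
    (nodup_pushTimes π n).mem_drop_iff]
  grind

theorem mem_pushTimes_succ {n t : ℕ} (ht : t ∈ A.pushTimes π (n + 1)) :
    t ∈ A.pushTimes π n ∨ t = n + 1 := by
  by_cases h : π (n + 1) ∈ A.stackAt π n
  · rw [pushTimes_succ_of_mem h] at ht
    exact Or.inl (List.mem_of_mem_take ht)
  · rw [pushTimes_succ_of_notMem h] at ht
    simpa using ht

theorem finite_setOf_forall_mem_pushTimes (π : ℕ → A.V) :
    {t | ∀ n, t ≤ n → t ∈ A.pushTimes π n}.Finite := by
  by_contra hinf
  obtain ⟨T, hT, hcard⟩ := Set.Infinite.exists_subset_card_eq hinf (Fintype.card A.V + 1)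
  have hsub : T ⊆ (A.pushTimes π (T.sup id)).toFinset := fun t ht =>
    List.mem_toFinset.2 (hT ht _ (Finset.le_sup (f := id) ht))
  have := (Finset.card_le_card hsub).trans ((List.toFinset_card_le _).trans
    (length_pushTimes_le_card π _))
  omega

/-- An edge on no output cycle pushes an entry that is never popped. -/
theorem eventually_exists_labelAt_mem_cycleAt (π : ℕ → A.V) :
    ∀ᶠ j in atTop, ∃ n ≥ j, ∃ cy, A.cycleAt π n = some cy ∧ A.labelAt π j ∈ A.cycLabels cy := by
  rw [← Nat.cofinite_eq_atTop, eventually_cofinite]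
  refine ((finite_setOf_forall_mem_pushTimes π).preimage Nat.succ_injective.injOn).subset ?_
  intro j hj n hn
  have hpush : π (j + 1) ∉ A.stackAt π j := fun h =>
    hj ⟨j, le_rfl, _, cycleAt_of_mem h, (mem_cycLabels_cycleAt (cycleAt_of_mem h)).2 (Or.inl rfl)⟩
  induction n, hn using Nat.le_induction with
  | base => simp [pushTimes_succ_of_notMem hpush]
  | succ n hn ih =>
    by_contra hout
    by_cases h : π (n + 1) ∈ A.stackAt π n
    · exact hj ⟨n, by simp at hn; omega, _, cycleAt_of_mem h,
        (mem_cycLabels_cycleAt (cycleAt_of_mem h)).2 (Or.inr ⟨j + 1, ih, hout, rfl⟩)⟩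
    · exact hout (by simp [pushTimes_succ_of_notMem h, ih])

theorem exists_forall_mem_pushTimes_succ (π : ℕ → A.V) (N : ℕ) : ∃ M, N ≤ M ∧
    ∀ n, M ≤ n → ∀ t ≤ N, t ∈ A.pushTimes π n → t ∈ A.pushTimes π (n + 1) := by
  set old : ℕ → Finset ℕ := fun k => (A.pushTimes π (N + k)).toFinset.filter (· ≤ N)
  have hold : Antitone old := antitone_nat_of_succ_le fun k t ht => by
    obtain ⟨ht, htN⟩ : t ∈ A.pushTimes π (N + (k + 1)) ∧ t ≤ N := by simpa [old] using ht
    simpa [old] using ⟨(mem_pushTimes_succ (n := N + k) ht).resolve_right (by omega), htN⟩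
  obtain ⟨K, hK⟩ := WellFoundedLT.antitone_chain_condition hold
  refine ⟨N + K, by omega, fun n hn t htN ht => ?_⟩
  obtain ⟨k, rfl⟩ := Nat.exists_eq_add_of_le (show N ≤ n by omega)
  have hmem : t ∈ old (k + 1) := by
    rw [← hK (k + 1) (by omega), hK k (by omega)]
    simpa [old] using ⟨ht, htN⟩
  exact List.mem_toFinset.1 (Finset.mem_filter.1 hmem).1

theorem exists_cycleAt_isGreatest [LinearOrder U] (π : ℕ → A.V) :
    ∃ p, (∃ᶠ j in atTop, A.labelAt π j = p) ∧ (∀ᶠ j in atTop, A.labelAt π j ≤ p) ∧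
      ∃ n cy, A.cycleAt π n = some cy ∧ IsGreatest {x | x ∈ A.cycLabels cy} p := by
  have hfin : (Set.range (A.labelAt π)).Finite :=
    (Set.finite_range fun e : A.V × A.V => A.lab e.1 e.2).subset
      (Set.range_subset_iff.2 fun j => ⟨(π j, π (j + 1)), rfl⟩)
  obtain ⟨p, hfreq, hle⟩ := exists_frequently_eq_eventually_le hfin
  obtain ⟨N, hN⟩ := eventually_atTop.1 hle
  obtain ⟨M, hNM, hM⟩ := exists_forall_mem_pushTimes_succ π N
  -- after time `M`, an output cycle consists of edges taken after time `N`
  have hbound : ∀ n ≥ M, ∀ cy, A.cycleAt π n = some cy → ∀ x ∈ A.cycLabels cy, x ≤ p := by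
    intro n hn cy hcy x hx
    rcases (mem_cycLabels_cycleAt hcy).1 hx with rfl | ⟨t, ht, hpop, rfl⟩
    · exact hN n (by omega)
    · have hNt : N < t := by
        by_contra! htN
        exact hpop (hM n hn t htN ht)
      exact hN _ (by omega)
  obtain ⟨j, hjp, hjM, n, hjn, cy, hcy, hj⟩ := (hfreq.and_eventually
    ((eventually_ge_atTop M).and (eventually_exists_labelAt_mem_cycleAt π))).exists
  exact ⟨p, hfreq, hle, n, cy, hcy, hjp ▸ hj, hbound n (by omega) cy hcy⟩

end Arena

theorem stmt13_general (A : Arena ℕ) (π : ℕ → A.V) :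
    (A.ACObj cycParity π →
      ∃ p, InfOftenMax (fun j => A.lab (π j) (π (j + 1))) p ∧ Even p) ∧
    (A.ACObj cycParityᶜ π →
      ∃ p, InfOftenMax (fun j => A.lab (π j) (π (j + 1))) p ∧ Odd p) := by
  obtain ⟨p, hfreq, hle, n, cy, hcy, hmax⟩ := A.exists_cycleAt_isGreatest π
  have hp := infOftenMax_of_frequently_of_eventually hfreq hle
  exact ⟨fun hY => ⟨p, hp, (mem_cycParity_iff hmax).1 (hY n cy hcy)⟩, fun hY =>
    ⟨p, hp, Nat.not_even_iff_odd.1 fun he => hY n cy hcy ((mem_cycParity_iff hmax).2 he)⟩⟩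

/-- the parity condition is cyc-Parity-greedy on every arena. -/
theorem stmt13 (A : Arena ℕ) (π : ℕ → A.V) (hπ : A.IsPlay π) :
    (A.ACObj cycParity π →
      ∃ p, InfOftenMax (fun j => A.lab (π j) (π (j + 1))) p ∧ Even p) ∧
    (A.ACObj cycParityᶜ π →
      ∃ p, InfOftenMax (fun j => A.lab (π j) (π (j + 1))) p ∧ Odd p) :=
  stmt13_general A π
end
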